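/- arXiv:2404.02159 — 6 statements merged into one kernel-verified Lean document; each statement's English description precedes it below -/
import Mathlib

section
/- Let S ⊆ ℝⁿ be convex, let ε : S → ℝ be convex on S with 0 ≤ ε(m) < 1 for all m ∈ S, and let p : S → ℝ be convex with p(m) > 0 for all m ∈ S. Then the time-average AoI function Δ̄(m) = p(m)/2 + p(m)/(1 − ε(m)) is quasiconvex on S: every sublevel set {m ∈ S : Δ̄(m) ≤ α} is convex. -/
/-- Corollary 1 (quasiconvexity of the time-average AoI): if `S ⊆ ℝⁿ` is convex,
`ε` is convex on `S` with `0 ≤ ε(m) < 1`, and `p` is convex and positive on `S`,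
then `Δ̄(m) = p(m)/2 + p(m)/(1 − ε(m))` is quasiconvex on `S`: every sublevel set
is convex. -/
theorem aoi_quasiconvex {n : ℕ} (S : Set (Fin n → ℝ)) (hS : Convex ℝ S)
    (ε p : (Fin n → ℝ) → ℝ)
    (hε : ConvexOn ℝ S ε) (hε0 : ∀ m ∈ S, 0 ≤ ε m) (hε1 : ∀ m ∈ S, ε m < 1)
    (hp : ConvexOn ℝ S p) (hppos : ∀ m ∈ S, 0 < p m) :
    QuasiconvexOn ℝ S (fun m => p m / 2 + p m / (1 - ε m)) ∧
    ∀ α : ℝ, Convex ℝ {m ∈ S | p m / 2 + p m / (1 - ε m) ≤ α} := by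
  have aux : ∀ (P E α : ℝ), E < 1 →
      (P / 2 + P / (1 - E) ≤ α ↔ P * (3 - E) ≤ 2 * α * (1 - E)) := by
    intro P E α hE
    have h1 : (0:ℝ) < 1 - E := by linarith
    rw [div_add_div _ _ two_ne_zero (ne_of_gt h1), div_le_iff₀ (by positivity)]
    constructor <;> intro h <;> nlinarith
  have key : ∀ α : ℝ, Convex ℝ {m ∈ S | p m / 2 + p m / (1 - ε m) ≤ α} := by
    intro α u hu v hv a b ha hb hab
    obtain ⟨huS, hu'⟩ := hu
    obtain ⟨hvS, hv'⟩ := hv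
    have hmS : a • u + b • v ∈ S := hS huS hvS ha hb hab
    refine ⟨hmS, ?_⟩
    set m := a • u + b • v with hm
    have hεu1 := hε1 u huS
    have hεv1 := hε1 v hvS
    have hεu0 := hε0 u huS
    have hεv0 := hε0 v hvS
    have hpu := hppos u huS
    have hpv := hppos v hvS
    have hεm1 : ε m < 1 := hε1 m hmS
    have hpm0 : 0 < p m := hppos m hmS
    have hεm : ε m ≤ a * ε u + b * ε v := hε.2 huS hvS ha hb hab
    have hpm : p m ≤ a * p u + b * p v := hp.2 huS hvS ha hb hab
    rw [aux _ _ _ hεu1] at hu'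
    rw [aux _ _ _ hεv1] at hv'
    rw [aux _ _ _ hεm1]
    have hα : 0 < α := by nlinarith
    set x := a * ε u + b * ε v with hx
    have hx3 : (0:ℝ) < 3 - x := by nlinarith
    have h3m : (0:ℝ) < 3 - ε m := by linarith
    have h3u : (0:ℝ) < 3 - ε u := by linarith
    have h3v : (0:ℝ) < 3 - ε v := by linarith
    have hb' : b = 1 - a := by linarith
    subst hb'
    have h1 : a * (3 - x) * (3 - ε v) * (p u * (3 - ε u))
        ≤ a * (3 - x) * (3 - ε v) * (2 * α * (1 - ε u)) :=
      mul_le_mul_of_nonneg_left hu' (mul_nonneg (mul_nonneg ha hx3.le) h3v.le)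
    have h2 : (1 - a) * (3 - x) * (3 - ε u) * (p v * (3 - ε v))
        ≤ (1 - a) * (3 - x) * (3 - ε u) * (2 * α * (1 - ε v)) :=
      mul_le_mul_of_nonneg_left hv' (mul_nonneg (mul_nonneg hb hx3.le) h3u.le)
    have hid : 2 * α * (1 - x) * ((3 - ε u) * (3 - ε v))
        - (a * (3 - x) * (3 - ε v) * (2 * α * (1 - ε u))
          + (1 - a) * (3 - x) * (3 - ε u) * (2 * α * (1 - ε v)))
        = 4 * α * (a * (1 - a) * (ε u - ε v) ^ 2) := by
      simp only [hx]; ring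
    have hA' : (a * p u + (1 - a) * p v) * (3 - x) * ((3 - ε u) * (3 - ε v))
        ≤ 2 * α * (1 - x) * ((3 - ε u) * (3 - ε v)) := by
      nlinarith [mul_nonneg (mul_nonneg hα.le (mul_nonneg ha hb)) (sq_nonneg (ε u - ε v))]
    have hA : (a * p u + (1 - a) * p v) * (3 - x) ≤ 2 * α * (1 - x) :=
      le_of_mul_le_mul_right hA' (mul_pos h3u h3v)
    -- Step B: monotonicity (q decreasing) : 2α(1-x)(3-εm) ≤ 2α(1-εm)(3-x)
    have hB : 2 * α * (1 - x) * (3 - ε m) ≤ 2 * α * (1 - ε m) * (3 - x) := by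
      nlinarith
    have hP0 : 0 ≤ a * p u + (1 - a) * p v := add_nonneg (mul_nonneg ha hpu.le) (mul_nonneg hb hpv.le)
    have hC : p m * (3 - ε m) * (3 - x) ≤ 2 * α * (1 - ε m) * (3 - x) := by
      calc p m * (3 - ε m) * (3 - x)
          ≤ (a * p u + (1 - a) * p v) * (3 - ε m) * (3 - x) :=
            mul_le_mul_of_nonneg_right (mul_le_mul_of_nonneg_right hpm h3m.le) hx3.le
        _ = (a * p u + (1 - a) * p v) * (3 - x) * (3 - ε m) := by ring
        _ ≤ 2 * α * (1 - x) * (3 - ε m) := mul_le_mul_of_nonneg_right hA h3m.le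
        _ ≤ 2 * α * (1 - ε m) * (3 - x) := hB
    linarith [le_of_mul_le_mul_right hC hx3]
  exact ⟨key, key⟩
end

section
/- Fix a constant c ≥ 0. The function g(γ) = (ln(1+γ) − c) / √(1 − (1+γ)^{−2}) is strictly increasing on (0, ∞). Equivalently, writing u = 1+γ, the derivative of u·(ln u − c)/√(u²−1) with respect to u has the sign of u² − 1 − (ln u − c), which is positive for all u > 1 when c ≥ 0. -/
/-!
Substituting `u = 1 + γ` and writing `s(u) = √(1 - u⁻²)`, so that `u² s² = u² - 1`, the quotient
rule gives `d/du [(log u - c) / s(u)] = (u² - 1 - (log u - c)) / (u³ s³)`. For `u > 1` the numerator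
is positive because `log u < u - 1 < u² - 1` and `c ≥ 0`, so the function is strictly increasing.
-/

open Real Set

lemma log_sub_lt_sq_sub_one {c u : ℝ} (hc : 0 ≤ c) (hu : 1 < u) :
    log u - c < u ^ 2 - 1 := by
  have hlog : log u < u - 1 := log_lt_sub_one_of_pos (by linarith) hu.ne'
  nlinarith

lemma one_sub_inv_sq_pos {u : ℝ} (hu : 1 < u) : 0 < 1 - (u ^ 2)⁻¹ := by
  have : (u ^ 2)⁻¹ < 1 := inv_lt_one_of_one_lt₀ (one_lt_pow₀ hu two_ne_zero)
  linarith

lemma hasDerivAt_sqrt_one_sub_inv_sq {u : ℝ} (hu : 1 < u) :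
    HasDerivAt (fun u => √(1 - (u ^ 2)⁻¹)) (1 / (u ^ 3 * √(1 - (u ^ 2)⁻¹))) u := by
  have hw := one_sub_inv_sq_pos hu
  refine ((((hasDerivAt_pow 2 u).fun_inv (by positivity)).const_sub 1).sqrt hw.ne').congr_deriv ?_
  have hs : √(1 - (u ^ 2)⁻¹) ≠ 0 := (sqrt_pos.mpr hw).ne'
  field_simp
  ring

lemma hasDerivAt_log_sub_div_sqrt_one_sub_inv_sq (c : ℝ) {u : ℝ} (hu : 1 < u) :
    HasDerivAt (fun u => (log u - c) / √(1 - (u ^ 2)⁻¹))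
      ((u ^ 2 - 1 - (log u - c)) / (u ^ 3 * √(1 - (u ^ 2)⁻¹) ^ 3)) u := by
  have hu0 : u ≠ 0 := by positivity
  have hw := one_sub_inv_sq_pos hu
  have hs : √(1 - (u ^ 2)⁻¹) ≠ 0 := (sqrt_pos.mpr hw).ne'
  refine (((hasDerivAt_log hu0).sub_const c).fun_div (hasDerivAt_sqrt_one_sub_inv_sq hu)
    hs).congr_deriv ?_
  have hus : u ^ 2 * √(1 - (u ^ 2)⁻¹) ^ 2 = u ^ 2 - 1 := by
    rw [sq_sqrt hw.le]
    field_simp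
  generalize √(1 - (u ^ 2)⁻¹) = s at hs hus ⊢
  field_simp
  linear_combination hus

lemma strictMonoOn_log_sub_div_sqrt_one_sub_inv_sq {c : ℝ} (hc : 0 ≤ c) :
    StrictMonoOn (fun u => (log u - c) / √(1 - (u ^ 2)⁻¹)) (Ioi 1) := by
  refine strictMonoOn_of_deriv_pos (convex_Ioi 1) (fun u hu =>
    (hasDerivAt_log_sub_div_sqrt_one_sub_inv_sq c hu).continuousAt.continuousWithinAt) ?_
  intro u hu
  rw [interior_Ioi, mem_Ioi] at hu
  rw [(hasDerivAt_log_sub_div_sqrt_one_sub_inv_sq c hu).deriv]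
  have hs := sqrt_pos.mpr (one_sub_inv_sq_pos hu)
  have hu0 : 0 < u := by linarith
  exact div_pos (sub_pos.mpr (log_sub_lt_sq_sub_one hc hu)) (by positivity)

/-- For a fixed constant `c ≥ 0`, the function
`g(γ) = (ln(1+γ) − c)/√(1 − (1+γ)^{−2})` is strictly increasing on `(0, ∞)`;
moreover (with `u = 1+γ`) the quantity `u² − 1 − (ln u − c)`, which gives the sign
of the derivative of `u·(ln u − c)/√(u²−1)`, is positive for all `u > 1`. -/
theorem fbl_omega_strictMono (c : ℝ) (hc : 0 ≤ c) :
    StrictMonoOn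
      (fun γ : ℝ => (Real.log (1 + γ) - c) / Real.sqrt (1 - ((1 + γ) ^ 2)⁻¹))
      (Set.Ioi 0) ∧
    ∀ u : ℝ, 1 < u → 0 < u ^ 2 - 1 - (Real.log u - c) := by
  refine ⟨fun x hx y hy hxy => ?_, fun u hu => sub_pos.mpr (log_sub_lt_sq_sub_one hc hu)⟩
  have hx1 : 1 < 1 + x := by linarith [mem_Ioi.mp hx]
  have hy1 : 1 < 1 + y := by linarith [mem_Ioi.mp hy]
  exact strictMonoOn_log_sub_div_sqrt_one_sub_inv_sq hc hx1 hy1 (by linarith)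
end

section
/- Fix a constant c ≥ 0. The function g(γ) = (ln(1+γ) − c) / √(1 − (1+γ)^{−2}) is concave on [1, ∞). Equivalently, writing u = 1+γ ≥ 2, the second derivative of u·(ln u − c)/√(u²−1) with respect to u has the sign of 3u·(ln u − c) − (u²−1)(u + 1/u), which is nonpositive for all u ≥ 2 when c ≥ 0. -/
/-!
With `u = 1 + γ` and `s = √(u² - 1)` one has `√(1 - u⁻²) = s / u`, so `g` is a translate of
`f(u) = u (log u - c) / s`. Differentiating twice gives `f' = (u² - 1 - (log u - c)) / s³` and
`f'' = (3u (log u - c) - (u² - 1)(u + 1/u)) / s⁵`. Since `log u ≤ u - 1` and `c ≥ 0`, the numerator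
of `f''` is at most `(u - 1)(3u² - (u + 1)(u² + 1)) / u = -(u - 1)(u (u - 1)² + 1) / u ≤ 0`
for `u ≥ 1`, so `f` is concave on `(1, ∞)`.
-/

open Real Set

section

variable (c : ℝ) {u : ℝ}

lemma three_mul_log_sub_le (hc : 0 ≤ c) (hu : 1 ≤ u) :
    3 * u * (log u - c) - (u ^ 2 - 1) * (u + 1 / u) ≤ 0 := by
  have hu0 : 0 < u := by linarith
  have hlog : log u ≤ u - 1 := log_le_sub_one_of_pos hu0
  have hcubic : 0 ≤ (u - 1) * (u * (u - 1) ^ 2 + 1) := by positivity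
  have hkey : 3 * u ^ 2 * (log u - c) - (u ^ 2 - 1) * (u ^ 2 + 1) ≤ 0 := by
    nlinarith [mul_nonneg (sq_nonneg u) hc, mul_le_mul_of_nonneg_left hlog (sq_nonneg u)]
  have hexpand : 3 * u * (log u - c) - (u ^ 2 - 1) * (u + 1 / u)
      = (3 * u ^ 2 * (log u - c) - (u ^ 2 - 1) * (u ^ 2 + 1)) / u := by
    field_simp
  rw [hexpand]
  exact div_nonpos_of_nonpos_of_nonneg hkey hu0.le

lemma sqrt_one_sub_inv_sq (hu : 0 < u) : √(1 - (u ^ 2)⁻¹) = √(u ^ 2 - 1) / u := by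
  rw [← sqrt_sq hu.le, ← sqrt_div' _ (sq_nonneg u), sqrt_sq hu.le]
  congr 1
  field_simp

lemma hasDerivAt_sqrt_sq_sub_one (hu : 1 < u) :
    HasDerivAt (fun v : ℝ => √(v ^ 2 - 1)) (u / √(u ^ 2 - 1)) u := by
  have hpos : 0 < u ^ 2 - 1 := by nlinarith
  convert (((hasDerivAt_pow 2 u).sub_const 1).sqrt hpos.ne') using 1
  field_simp
  ring

lemma hasDerivAt_log_sub_div_sqrt (hu : 1 < u) :
    HasDerivAt (fun v : ℝ => (log v - c) / √(1 - (v ^ 2)⁻¹))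
      ((u ^ 2 - 1 - (log u - c)) / √(u ^ 2 - 1) ^ 3) u := by
  have hu0 : 0 < u := by linarith
  have hs : 0 < √(u ^ 2 - 1) := sqrt_pos.mpr (by nlinarith)
  have hsq : √(u ^ 2 - 1) ^ 2 = u ^ 2 - 1 := sq_sqrt (by nlinarith)
  have heq : (fun v : ℝ => v * (log v - c) / √(v ^ 2 - 1))
      =ᶠ[nhds u] fun v => (log v - c) / √(1 - (v ^ 2)⁻¹) := by
    filter_upwards [lt_mem_nhds hu0] with v hv
    rw [sqrt_one_sub_inv_sq hv, div_div_eq_mul_div, mul_comm]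
  have hnum : HasDerivAt (fun v : ℝ => v * (log v - c)) (1 * (log u - c) + u * u⁻¹) u :=
    (hasDerivAt_id' u).mul ((hasDerivAt_log hu0.ne').sub_const c)
  refine ((hnum.div (hasDerivAt_sqrt_sq_sub_one hu) hs.ne').congr_of_eventuallyEq
    heq.symm).congr_deriv ?_
  field_simp
  linear_combination (1 + log u - c) * hsq

lemma hasDerivAt_sq_sub_one_sub_log_div (hu : 1 < u) :
    HasDerivAt (fun v : ℝ => (v ^ 2 - 1 - (log v - c)) / √(v ^ 2 - 1) ^ 3)
      ((3 * u * (log u - c) - (u ^ 2 - 1) * (u + 1 / u)) / √(u ^ 2 - 1) ^ 5) u := by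
  have hu0 : 0 < u := by linarith
  have hs : 0 < √(u ^ 2 - 1) := sqrt_pos.mpr (by nlinarith)
  have hsq : √(u ^ 2 - 1) ^ 2 = u ^ 2 - 1 := sq_sqrt (by nlinarith)
  have hnum : HasDerivAt (fun v : ℝ => v ^ 2 - 1 - (log v - c)) (2 * u - u⁻¹) u :=
    (((hasDerivAt_pow 2 u).sub_const 1).sub ((hasDerivAt_log hu0.ne').sub_const c)).congr_deriv
      (by norm_num)
  have hden : HasDerivAt (fun v : ℝ => √(v ^ 2 - 1) ^ 3)
      (3 * √(u ^ 2 - 1) ^ 2 * (u / √(u ^ 2 - 1))) u :=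
    ((hasDerivAt_sqrt_sq_sub_one hu).pow 3).congr_deriv (by norm_num)
  refine (hnum.div hden (by positivity)).congr_deriv ?_
  field_simp
  linear_combination (2 * u ^ 2 - 1) * hsq

theorem concaveOn_log_sub_div_sqrt (hc : 0 ≤ c) :
    ConcaveOn ℝ (Ioi 1) (fun v : ℝ => (log v - c) / √(1 - (v ^ 2)⁻¹)) := by
  refine concaveOn_of_hasDerivWithinAt2_nonpos (convex_Ioi 1)
    (f' := fun u => (u ^ 2 - 1 - (log u - c)) / √(u ^ 2 - 1) ^ 3)
    (f'' := fun u => (3 * u * (log u - c) - (u ^ 2 - 1) * (u + 1 / u)) / √(u ^ 2 - 1) ^ 5)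
    (fun u hu => (hasDerivAt_log_sub_div_sqrt c hu).continuousAt.continuousWithinAt) ?_ ?_ ?_
  all_goals rw [interior_Ioi]; intro u (hu : 1 < u)
  · exact (hasDerivAt_log_sub_div_sqrt c hu).hasDerivWithinAt
  · exact (hasDerivAt_sq_sub_one_sub_log_div c hu).hasDerivWithinAt
  · exact div_nonpos_of_nonpos_of_nonneg (three_mul_log_sub_le c hc hu.le) (by positivity)

end

/-- For a fixed constant `c ≥ 0`, the function
`g(γ) = (ln(1+γ) − c)/√(1 − (1+γ)^{−2})` is concave on `[1, ∞)`;
moreover (with `u = 1+γ ≥ 2`) the quantity `3u·(ln u − c) − (u²−1)(u + 1/u)`,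
which gives the sign of the second derivative of `u·(ln u − c)/√(u²−1)`,
is nonpositive for all `u ≥ 2`. -/
theorem fbl_omega_concave (c : ℝ) (hc : 0 ≤ c) :
    ConcaveOn ℝ (Set.Ici 1)
      (fun γ : ℝ => (Real.log (1 + γ) - c) / Real.sqrt (1 - ((1 + γ) ^ 2)⁻¹)) ∧
    ∀ u : ℝ, 2 ≤ u →
      3 * u * (Real.log u - c) - (u ^ 2 - 1) * (u + 1 / u) ≤ 0 := by
  refine ⟨?_, fun u hu => three_mul_log_sub_le c hc (by linarith)⟩
  refine ((concaveOn_log_sub_div_sqrt c hc).translate_right 1).subset ?_ (convex_Ici 1)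
  exact fun γ (hγ : 1 ≤ γ) => show 1 < 1 + γ by linarith
end

section
/- Fix m_c > 0, m_r > 0 and D ≥ 0, and for z > 0 let γ(z) = z·m_c/m_r, V(γ) = 1 − (1+γ)^{−2}, and ε(z) = Q( √(m_r / V(γ(z))) · (log₂(1+γ(z)) − D/m_r) · ln 2 ), where Q(x) = ∫_x^∞ (1/√(2π)) e^{−t²/2} dt. Then ε(z) is (strictly) decreasing in z on (0, ∞); consequently, with M = m_c + m_r, the time-average AoI Δ̄(z) = M/2 + M/(1 − ε(z)) is (strictly) decreasing in z on (0, ∞). In particular, introducing into the cluster an additional device with channel gain at least as good as the worst existing device, and giving it the same charging and update durations, does not increase the minimized maximum time-average AoI. -/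
open MeasureTheory

/-- The Gaussian Q-function `Q(x) = ∫_x^∞ (1/√(2π))·e^{−t²/2} dt`. -/
noncomputable def gaussQ (x : ℝ) : ℝ :=
  ∫ t in Set.Ioi x, (Real.sqrt (2 * Real.pi))⁻¹ * Real.exp (-t ^ 2 / 2)

/-- Finite-blocklength packet error probability of a device with channel gain `z`,
charging duration `mc`, update duration `mr` and packet size `D`:
`ε = Q(√(mr/V(γ))·(log₂(1+γ) − D/mr)·ln 2)` with `γ = z·mc/mr` and
`V(γ) = 1 − (1+γ)^{−2}`. -/
noncomputable def errProb (mc mr D z : ℝ) : ℝ :=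
  gaussQ (Real.sqrt (mr / (1 - ((1 + z * mc / mr) ^ 2)⁻¹)) *
    (Real.logb 2 (1 + z * mc / mr) - D / mr) * Real.log 2)

/-- Time-average AoI `Δ̄ = M/2 + M/(1−ε)` with `M = mc + mr`. -/
noncomputable def avgAoI (mc mr D z : ℝ) : ℝ :=
  (mc + mr) / 2 + (mc + mr) / (1 - errProb mc mr D z)

/-! `Q` is strictly decreasing and stays below `1`, because the standard normal density is positive
and integrates to `1`. Writing `u = 1 + γ` and `c = D ln 2 / mr ≥ 0`, the argument of `Q` is
`√mr · u (ln u − c) / √(u² − 1)`, whose derivative in `u` has numerator `u² − 1 − ln u + c > 0`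
on `(1, ∞)`. As `γ` grows with `z`, `ε` decreases, and `Δ̄ = M/2 + M/(1 − ε)` decreases with `ε`
since `ε < 1`. -/

open Real Set ProbabilityTheory

lemma gaussQ_eq_setIntegral_gaussianPDFReal (x : ℝ) :
    gaussQ x = ∫ t in Ioi x, gaussianPDFReal 0 1 t := by
  simp [gaussQ, gaussianPDFReal]

lemma gaussQ_strictAnti : StrictAnti gaussQ := by
  intro x y hxy
  have hpdf := integrable_gaussianPDFReal 0 1
  rw [gaussQ_eq_setIntegral_gaussianPDFReal, gaussQ_eq_setIntegral_gaussianPDFReal, ← sub_pos,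
    intervalIntegral.integral_Ioi_sub_Ioi hpdf.integrableOn hxy.le]
  exact intervalIntegral.intervalIntegral_pos_of_pos hpdf.intervalIntegrable
    (fun t => gaussianPDFReal_pos 0 1 t one_ne_zero) hxy

lemma gaussQ_le_one (x : ℝ) : gaussQ x ≤ 1 := by
  rw [gaussQ_eq_setIntegral_gaussianPDFReal, ← integral_gaussianPDFReal_eq_one 0 one_ne_zero]
  exact setIntegral_le_integral (integrable_gaussianPDFReal 0 1)
    (Filter.Eventually.of_forall (gaussianPDFReal_nonneg 0 1))

lemma gaussQ_lt_one (x : ℝ) : gaussQ x < 1 :=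
  (gaussQ_strictAnti (sub_one_lt x)).trans_le (gaussQ_le_one _)

/-- With `u = 1 + γ` and `c = D ln 2 / mr`, `√mr · normalizedMargin c u` is the argument of `Q`
in `errProb`, since `u / √(u² − 1) = 1 / √V(γ)`. -/
noncomputable def normalizedMargin (c u : ℝ) : ℝ :=
  u * (log u - c) / √(u ^ 2 - 1)

lemma hasDerivAt_normalizedMargin (c : ℝ) {u : ℝ} (hu : 1 < u) :
    HasDerivAt (normalizedMargin c)
      ((u ^ 2 - 1 - (log u - c)) / ((u ^ 2 - 1) * √(u ^ 2 - 1))) u := by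
  have hs : 0 < u ^ 2 - 1 := by nlinarith
  have hnum : HasDerivAt (fun u => u * (log u - c)) (1 * (log u - c) + u * u⁻¹) u :=
    (hasDerivAt_id u).mul ((hasDerivAt_log (by positivity)).sub_const c)
  have hden : HasDerivAt (fun u => √(u ^ 2 - 1)) (2 * u ^ 1 / (2 * √(u ^ 2 - 1))) u :=
    ((hasDerivAt_pow 2 u).sub_const 1).sqrt hs.ne'
  refine (hnum.div hden (sqrt_pos.2 hs).ne').congr_deriv ?_
  field_simp
  rw [sq_sqrt hs.le]
  ring

lemma strictMonoOn_normalizedMargin {c : ℝ} (hc : 0 ≤ c) :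
    StrictMonoOn (normalizedMargin c) (Ioi 1) := by
  refine strictMonoOn_of_hasDerivWithinAt_pos (convex_Ioi 1)
    (f' := fun u => (u ^ 2 - 1 - (log u - c)) / ((u ^ 2 - 1) * √(u ^ 2 - 1)))
    (fun u hu => (hasDerivAt_normalizedMargin c hu).continuousAt.continuousWithinAt)
    (fun u hu => ?_) (fun u hu => ?_) <;> rw [interior_Ioi] at *
  · exact (hasDerivAt_normalizedMargin c hu).hasDerivWithinAt
  · have hu : 1 < u := hu
    have hs : 0 < u ^ 2 - 1 := by nlinarith
    have hlog : log u < u ^ 2 - 1 := by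
      nlinarith [log_lt_sub_one_of_pos (one_pos.trans hu) hu.ne']
    have : 0 < u ^ 2 - 1 - (log u - c) := by linarith
    positivity

lemma errProb_eq_gaussQ_normalizedMargin {mc mr : ℝ} (D : ℝ) (hmr : 0 < mr) {z : ℝ}
    (hγ : 0 < z * mc / mr) :
    errProb mc mr D z =
      gaussQ (√mr * normalizedMargin (D * log 2 / mr) (1 + z * mc / mr)) := by
  have hu : 1 < 1 + z * mc / mr := by linarith
  rw [errProb, normalizedMargin]
  generalize 1 + z * mc / mr = u at hu ⊢
  have hs : 0 < u ^ 2 - 1 := by nlinarith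
  have hV : 1 - (u ^ 2)⁻¹ = (u ^ 2 - 1) / u ^ 2 := by field_simp
  rw [Real.logb, hV, div_div_eq_mul_div, sqrt_div (by positivity), sqrt_mul hmr.le,
    sqrt_sq (by positivity)]
  field_simp

lemma errProb_lt_one (mc mr D z : ℝ) : errProb mc mr D z < 1 :=
  gaussQ_lt_one _

lemma avgAoI_lt_avgAoI {mc mr D a b : ℝ} (hM : 0 < mc + mr)
    (hab : errProb mc mr D b < errProb mc mr D a) : avgAoI mc mr D b < avgAoI mc mr D a := by
  have ha := errProb_lt_one mc mr D a
  unfold avgAoI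
  gcongr

/-- For fixed `mc, mr > 0` and `D ≥ 0`, the error probability `ε(z)` is strictly
decreasing in the channel gain `z` on `(0, ∞)`, and consequently the time-average
AoI `Δ̄(z) = M/2 + M/(1 − ε(z))` is strictly decreasing in `z` on `(0, ∞)`. -/
theorem errProb_avgAoI_strictAnti_in_gain (mc mr D : ℝ)
    (hmc : 0 < mc) (hmr : 0 < mr) (hD : 0 ≤ D) :
    StrictAntiOn (fun z => errProb mc mr D z) (Set.Ioi 0) ∧
    StrictAntiOn (fun z => avgAoI mc mr D z) (Set.Ioi 0) := by
  have hc : 0 ≤ D * log 2 / mr := by positivity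
  have hγ : ∀ z ∈ Ioi (0 : ℝ), 0 < z * mc / mr := fun z (hz : 0 < z) => by positivity
  have hgain : StrictMonoOn (fun z => 1 + z * mc / mr) (Ioi 0) := fun a _ b _ hab => by
    dsimp only
    gcongr
  have hgain_mapsTo : MapsTo (fun z => 1 + z * mc / mr) (Ioi 0) (Ioi 1) := fun z hz =>
    lt_add_of_pos_right 1 (hγ z hz)
  have hErr : StrictAntiOn (errProb mc mr D) (Ioi 0) :=
    (gaussQ_strictAnti.comp_strictMonoOn
      ((strictMono_mul_left_of_pos (sqrt_pos.2 hmr)).comp_strictMonoOn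
        ((strictMonoOn_normalizedMargin hc).comp hgain hgain_mapsTo))).congr
      fun z hz => (errProb_eq_gaussQ_normalizedMargin D hmr (hγ z hz)).symm
  exact ⟨hErr, fun a ha b hb hab =>
    avgAoI_lt_avgAoI (by positivity) (hErr ha hb hab)⟩
end

section
/- Fix m_r > 0, z > 0 and D ≥ 0, and for m_c > 0 let γ = z·m_c/m_r, V(γ) = 1 − (1+γ)^{−2}, ω(m_c) = √(m_r / V(γ)) · (log₂(1+γ) − D/m_r) · ln 2, and ε(m_c) = Q(ω(m_c)), where Q(x) = ∫_x^∞ (1/√(2π)) e^{−t²/2} dt. Then ε is convex as a function of m_c on the set { m_c > 0 : γ = z·m_c/m_r ≥ 1 and log₂(1+γ) ≥ D/m_r }. -/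
open MeasureTheory

/-!
Q is decreasing, and convex on `[0, ∞)` because its derivative `−φ` is increasing there.
With `γ = z·mc/mr` and `c = D ln 2 / mr`, the argument `ω` of `Q` is
`√mr · (1+γ)(ln(1+γ) − c)/√(γ² + 2γ)`. For `c ≥ 0` its second derivative in `γ` has the sign of
`3(1+γ)²(ln(1+γ) − c) − (γ²+2γ)(γ²+2γ+2) ≤ −γ(γ³+γ²+1) < 0` (by `ln(1+γ) ≤ γ`), so `ω` is
concave in `mc`, and it is nonnegative where `log₂(1+γ) ≥ D/mr`. A convex decreasing function of
a nonnegative concave function is convex.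
-/

open Set Real ProbabilityTheory

theorem ConvexOn.comp_concaveOn_of_mapsTo {E : Type*} [AddCommGroup E] [Module ℝ E]
    {s : Set E} {t : Set ℝ} {f : E → ℝ} {g : ℝ → ℝ} (hg : ConvexOn ℝ t g) (hf : ConcaveOn ℝ s f)
    (hg' : AntitoneOn g t) (hfst : MapsTo f s t) : ConvexOn ℝ s (g ∘ f) :=
  ⟨hf.1, fun _ hx _ hy _ _ ha hb hab =>
    (hg' (hg.1 (hfst hx) (hfst hy) ha hb hab) (hfst (hf.1 hx hy ha hb hab))
      (hf.2 hx hy ha hb hab)).trans (hg.2 (hfst hx) (hfst hy) ha hb hab)⟩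

section TailIntegral

variable {f : ℝ → ℝ}

theorem hasDerivAt_integral_Ioi (hf : Continuous f) (hfi : Integrable f) (x : ℝ) :
    HasDerivAt (fun x => ∫ t in Ioi x, f t) (-f x) x := by
  have htail : (fun x => ∫ t in Ioi x, f t) = fun x => (∫ t in Ioi 0, f t) - ∫ t in 0..x, f t :=
    funext fun x => by
      rw [← intervalIntegral.integral_Ioi_sub_Ioi' hfi.integrableOn hfi.integrableOn, sub_sub_cancel]
  rw [htail]
  simpa using (hf.integral_hasStrictDerivAt 0 x).hasDerivAt.const_sub _

theorem antitone_integral_Ioi (hfi : Integrable f) (hf : 0 ≤ f) :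
    Antitone fun x => ∫ t in Ioi x, f t :=
  fun _ _ hxy => setIntegral_mono_set hfi.integrableOn (ae_of_all _ fun t => hf t)
    (Ioi_subset_Ioi hxy).eventuallyLE

theorem convexOn_integral_Ioi (hf : Continuous f) (hfi : Integrable f) {s : Set ℝ}
    (hs : Convex ℝ s) (hfs : AntitoneOn f s) : ConvexOn ℝ s fun x => ∫ t in Ioi x, f t := by
  refine MonotoneOn.convexOn_of_deriv hs
    (fun x _ => (hasDerivAt_integral_Ioi hf hfi x).continuousAt.continuousWithinAt)
    (fun x _ => (hasDerivAt_integral_Ioi hf hfi x).differentiableAt.differentiableWithinAt) ?_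
  intro x hx y hy hxy
  simp only [(hasDerivAt_integral_Ioi hf hfi _).deriv, neg_le_neg_iff]
  exact hfs (interior_subset hx) (interior_subset hy) hxy

end TailIntegral

theorem continuous_gaussianPDFReal (μ : ℝ) (v : NNReal) : Continuous (gaussianPDFReal μ v) := by
  unfold gaussianPDFReal
  fun_prop

theorem antitoneOn_gaussianPDFReal (μ : ℝ) (v : NNReal) :
    AntitoneOn (gaussianPDFReal μ v) (Ici μ) := by
  intro x hx y _ hxy
  simp only [gaussianPDFReal]
  gcongr
  exact sub_nonneg.2 hx

theorem gaussQ_eq_integral_gaussianPDFReal :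
    gaussQ = fun x => ∫ t in Ioi x, gaussianPDFReal 0 1 t := by
  ext x
  simp [gaussQ, gaussianPDFReal]

theorem gaussQ_antitone : Antitone gaussQ := by
  rw [gaussQ_eq_integral_gaussianPDFReal]
  exact antitone_integral_Ioi (integrable_gaussianPDFReal 0 1) (gaussianPDFReal_nonneg 0 1)

theorem gaussQ_convexOn : ConvexOn ℝ (Ici 0) gaussQ := by
  rw [gaussQ_eq_integral_gaussianPDFReal]
  exact convexOn_integral_Ioi (continuous_gaussianPDFReal 0 1) (integrable_gaussianPDFReal 0 1)
    (convex_Ici 0) (antitoneOn_gaussianPDFReal 0 1)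

/-- `ω = √mr · normalizedOmega (D ln 2 / mr) γ`, since `1/√V(γ) = (1+γ)/√(γ² + 2γ)`. -/
noncomputable def normalizedOmega (c t : ℝ) : ℝ :=
  (1 + t) / √(t ^ 2 + 2 * t) * (log (1 + t) - c)

noncomputable def normalizedOmegaDeriv (c t : ℝ) : ℝ :=
  (t ^ 2 + 2 * t - (log (1 + t) - c)) / √(t ^ 2 + 2 * t) ^ 3

section NormalizedOmega

variable {t : ℝ}

theorem hasDerivAt_sqrt_sq_add_two_mul (ht : 0 < t) :
    HasDerivAt (fun t => √(t ^ 2 + 2 * t)) ((1 + t) / √(t ^ 2 + 2 * t)) t := by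
  have hpoly : HasDerivAt (fun t : ℝ => t ^ 2 + 2 * t) (2 * t + 2) t :=
    ((hasDerivAt_pow 2 t).add ((hasDerivAt_id t).const_mul 2)).congr_deriv (by ring)
  refine ((hasDerivAt_sqrt (by positivity)).comp t hpoly).congr_deriv ?_
  field_simp
  ring

theorem hasDerivAt_log_one_add_sub (c : ℝ) (ht : 0 < t) :
    HasDerivAt (fun t => log (1 + t) - c) (1 + t)⁻¹ t := by
  simpa using (((hasDerivAt_id t).const_add 1).log (by positivity)).sub_const c

theorem hasDerivAt_normalizedOmega (c : ℝ) (ht : 0 < t) :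
    HasDerivAt (normalizedOmega c) (normalizedOmegaDeriv c t) t := by
  have hs : 0 < √(t ^ 2 + 2 * t) := by positivity
  have hs2 : √(t ^ 2 + 2 * t) ^ 2 = t ^ 2 + 2 * t := sq_sqrt (by positivity)
  have h := (((hasDerivAt_id t).const_add 1).div (hasDerivAt_sqrt_sq_add_two_mul ht)
    hs.ne').mul (hasDerivAt_log_one_add_sub c ht)
  refine h.congr_deriv ?_
  simp only [normalizedOmegaDeriv, Pi.div_apply, id]
  generalize √(t ^ 2 + 2 * t) = s at hs hs2
  field_simp
  linear_combination (log (1 + t) - c + 1) * hs2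

theorem hasDerivAt_normalizedOmegaDeriv (c : ℝ) (ht : 0 < t) :
    HasDerivAt (normalizedOmegaDeriv c)
      ((3 * (1 + t) ^ 2 * (log (1 + t) - c) - (t ^ 2 + 2 * t) * (t ^ 2 + 2 * t + 2)) /
        ((1 + t) * √(t ^ 2 + 2 * t) ^ 5)) t := by
  have hs : 0 < √(t ^ 2 + 2 * t) := by positivity
  have hs2 : √(t ^ 2 + 2 * t) ^ 2 = t ^ 2 + 2 * t := sq_sqrt (by positivity)
  have hnum : HasDerivAt (fun t : ℝ => t ^ 2 + 2 * t - (log (1 + t) - c))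
      (2 * t + 2 - (1 + t)⁻¹) t :=
    (((hasDerivAt_pow 2 t).add ((hasDerivAt_id t).const_mul 2)).sub
      (hasDerivAt_log_one_add_sub c ht)).congr_deriv (by ring)
  have h := hnum.div ((hasDerivAt_sqrt_sq_add_two_mul ht).pow 3) (pow_ne_zero 3 hs.ne')
  refine h.congr_deriv ?_
  simp only [Pi.pow_apply]
  have h1t : 1 + t ≠ 0 := by positivity
  generalize √(t ^ 2 + 2 * t) = s at hs hs2
  field_simp
  linear_combination s ^ 2 * (2 * t ^ 2 + 4 * t + 1) * hs2

theorem concaveOn_normalizedOmega {c : ℝ} (hc : 0 ≤ c) :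
    ConcaveOn ℝ (Ioi 0) (normalizedOmega c) := by
  refine concaveOn_of_hasDerivWithinAt2_nonpos (convex_Ioi 0)
    (fun t ht => (hasDerivAt_normalizedOmega c ht).continuousAt.continuousWithinAt)
    (fun t ht => (hasDerivAt_normalizedOmega c (interior_subset ht)).hasDerivWithinAt)
    (fun t ht => (hasDerivAt_normalizedOmegaDeriv c (interior_subset ht)).hasDerivWithinAt)
    fun t ht => ?_
  rw [interior_Ioi, mem_Ioi] at ht
  refine div_nonpos_of_nonpos_of_nonneg ?_ (by positivity)
  have hlog : log (1 + t) - c ≤ t := by linarith [log_le_sub_one_of_pos (by positivity : 0 < 1 + t)]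
  calc 3 * (1 + t) ^ 2 * (log (1 + t) - c) - (t ^ 2 + 2 * t) * (t ^ 2 + 2 * t + 2)
      ≤ 3 * (1 + t) ^ 2 * t - (t ^ 2 + 2 * t) * (t ^ 2 + 2 * t + 2) := by gcongr
    _ = -(t * (t ^ 3 + t ^ 2 + 1)) := by ring
    _ ≤ 0 := neg_nonpos.2 (by positivity)

end NormalizedOmega

noncomputable def errProbArg (mc mr D z : ℝ) : ℝ :=
  √(mr / (1 - ((1 + z * mc / mr) ^ 2)⁻¹)) * (logb 2 (1 + z * mc / mr) - D / mr) * log 2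

section ErrProbArg

variable {mc mr D z : ℝ}

theorem errProbArg_eq (hmr : 0 ≤ mr) (hγ : 0 < 1 + z * mc / mr) :
    errProbArg mc mr D z = √mr * normalizedOmega (D * log 2 / mr) (z * mc / mr) := by
  unfold errProbArg normalizedOmega
  generalize z * mc / mr = γ at hγ ⊢
  have hV : 1 - ((1 + γ) ^ 2)⁻¹ = (γ ^ 2 + 2 * γ) / (1 + γ) ^ 2 := by
    field_simp
    ring
  have hlog : (logb 2 (1 + γ) - D / mr) * log 2 = log (1 + γ) - D * log 2 / mr := by
    rw [logb]
    field_simp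
  rw [hV, div_div_eq_mul_div, sqrt_div (by positivity), sqrt_mul hmr, sqrt_sq hγ.le, mul_assoc,
    hlog]
  ring

theorem errProbArg_nonneg (h : D / mr ≤ logb 2 (1 + z * mc / mr)) : 0 ≤ errProbArg mc mr D z :=
  mul_nonneg (mul_nonneg (sqrt_nonneg _) (sub_nonneg.2 h)) (log_nonneg one_le_two)

theorem concaveOn_errProbArg (hmr : 0 ≤ mr) (hD : 0 ≤ D) :
    ConcaveOn ℝ {mc | 0 < z * mc / mr} fun mc => errProbArg mc mr D z := by
  have h := ((concaveOn_normalizedOmega (c := D * log 2 / mr) (by positivity)).smul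
    (sqrt_nonneg mr)).comp_linearMap (LinearMap.mulLeft ℝ (z / mr))
  have hset : {mc | 0 < z * mc / mr} = LinearMap.mulLeft ℝ (z / mr) ⁻¹' Ioi 0 := by
    ext mc
    simp [mul_div_right_comm]
  rw [hset]
  refine h.congr fun mc hmc => ?_
  simp only [mem_preimage, mem_Ioi, LinearMap.mulLeft_apply, ← mul_div_right_comm] at hmc
  simp only [Function.comp_apply, LinearMap.mulLeft_apply, smul_eq_mul,
    errProbArg_eq hmr (by linarith : 0 < 1 + z * mc / mr), mul_div_right_comm]

end ErrProbArg

theorem convex_setOf_one_le_and_le_logb_one_add {b : ℝ} (hb : 1 < b) (a : ℝ) :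
    Convex ℝ {t : ℝ | 1 ≤ t ∧ a ≤ logb b (1 + t)} :=
  OrdConnected.convex ⟨fun _ hx _ _ _ hw =>
    ⟨hx.1.trans hw.1, hx.2.trans (logb_le_logb_of_le hb (by linarith [hx.1]) (by linarith [hw.1]))⟩⟩

theorem convex_setOf_pos_and_one_le_and_le_logb (mr z D : ℝ) :
    Convex ℝ {mc : ℝ | 0 < mc ∧ 1 ≤ z * mc / mr ∧ D / mr ≤ logb 2 (1 + z * mc / mr)} := by
  have hset : {mc : ℝ | 0 < mc ∧ 1 ≤ z * mc / mr ∧ D / mr ≤ logb 2 (1 + z * mc / mr)} =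
      Ioi 0 ∩ (fun mc => (z / mr) • mc) ⁻¹' {t | 1 ≤ t ∧ D / mr ≤ logb 2 (1 + t)} := by
    ext mc
    simp only [mul_div_right_comm, mem_ofPred_eq, smul_eq_mul, preimage_ofPred_eq, mem_inter_iff,
      mem_Ioi]
  rw [hset]
  exact (convex_Ioi 0).inter
    ((convex_setOf_one_le_and_le_logb_one_add one_lt_two (D / mr)).smul_preimage (z / mr))

theorem errProb_convexOn_charging_general (mr z D : ℝ)
    (hmr : 0 < mr) (hD : 0 ≤ D) :
    ConvexOn ℝ
      {mc : ℝ | 0 < mc ∧ 1 ≤ z * mc / mr ∧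
        D / mr ≤ Real.logb 2 (1 + z * mc / mr)}
      (fun mc => errProb mc mr D z) := by
  have hω := (concaveOn_errProbArg (z := z) hmr.le hD).subset
    (fun mc hmc => zero_lt_one.trans_le hmc.2.1) (convex_setOf_pos_and_one_le_and_le_logb mr z D)
  exact gaussQ_convexOn.comp_concaveOn_of_mapsTo hω (gaussQ_antitone.antitoneOn _)
    fun mc hmc => errProbArg_nonneg hmc.2.2

/-- Lemma 2, first part (partial convexity in the charging duration): for fixed
`mr > 0`, `z > 0`, `D ≥ 0`, the error probability `mc ↦ ε(mc)` is convex on the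
set `{mc > 0 : γ = z·mc/mr ≥ 1 and log₂(1+γ) ≥ D/mr}`. -/
theorem errProb_convexOn_charging (mr z D : ℝ)
    (hmr : 0 < mr) (hz : 0 < z) (hD : 0 ≤ D) :
    ConvexOn ℝ
      {mc : ℝ | 0 < mc ∧ 1 ≤ z * mc / mr ∧
        D / mr ≤ Real.logb 2 (1 + z * mc / mr)}
      (fun mc => errProb mc mr D z) :=
  errProb_convexOn_charging_general mr z D hmr hD
end

section
/- For real γ ≥ 1 and r ≥ 0, define a₀ = 12·ln2·r − 36r, a₁ = 8 − 5·ln(1+γ) − 126r + 39·ln2·r, a₂ = 20 − 162r − 16·ln(1+γ) + 42·ln2·r, a₃ = 16 − 90r − 18·ln(1+γ) + 12·ln2·r, a₄ = 4 − 8·ln(1+γ) − 18r − 6·ln2·r, a₅ = −ln(1+γ) − 3·ln2·r, and â₀ = 12·ln2·r − 36r, â₁ = 8 − 129r − 5·ln(1+γ) + 33·ln2·r, â₂ = 24 − 180r − 25·ln(1+γ) + 39·ln2·r, â₃ = 16 − 18·ln(1+γ) − 87r + 12·ln2·r. Then a₀ + a₁γ + a₂γ² + a₃γ³ + a₄γ⁴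 + a₅γ⁵ ≤ â₀ + â₁γ + â₂γ² + â₃γ³. In particular, if additionally â₁ ≤ 0, â₂ ≤ 0 and â₃ ≤ 0, then a₀ + a₁γ + a₂γ² + a₃γ³ + a₄γ⁴ + a₅γ⁵ ≤ 0. -/
/-- Degree-reduction bound for the quintic `f(γ) = ∑_{k=0}^5 a_k γ^k` appearing in
the proof of Lemma 2: for `γ ≥ 1` and `r ≥ 0`, the quintic is bounded above by the
cubic `â₀ + â₁γ + â₂γ² + â₃γ³`; in particular, if `â₁ ≤ 0`, `â₂ ≤ 0` and `â₃ ≤ 0`,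
then `f(γ) ≤ 0`. -/
theorem quintic_degree_reduction (γ r : ℝ) (hγ : 1 ≤ γ) (hr : 0 ≤ r) :
    ((12 * Real.log 2 * r - 36 * r)
      + (8 - 5 * Real.log (1 + γ) - 126 * r + 39 * Real.log 2 * r) * γ
      + (20 - 162 * r - 16 * Real.log (1 + γ) + 42 * Real.log 2 * r) * γ ^ 2
      + (16 - 90 * r - 18 * Real.log (1 + γ) + 12 * Real.log 2 * r) * γ ^ 3
      + (4 - 8 * Real.log (1 + γ) - 18 * r - 6 * Real.log 2 * r) * γ ^ 4
      + (-Real.log (1 + γ) - 3 * Real.log 2 * r) * γ ^ 5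
      ≤ (12 * Real.log 2 * r - 36 * r)
      + (8 - 129 * r - 5 * Real.log (1 + γ) + 33 * Real.log 2 * r) * γ
      + (24 - 180 * r - 25 * Real.log (1 + γ) + 39 * Real.log 2 * r) * γ ^ 2
      + (16 - 18 * Real.log (1 + γ) - 87 * r + 12 * Real.log 2 * r) * γ ^ 3) ∧
    (8 - 129 * r - 5 * Real.log (1 + γ) + 33 * Real.log 2 * r ≤ 0 →
     24 - 180 * r - 25 * Real.log (1 + γ) + 39 * Real.log 2 * r ≤ 0 →
     16 - 18 * Real.log (1 + γ) - 87 * r + 12 * Real.log 2 * r ≤ 0 →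
     (12 * Real.log 2 * r - 36 * r)
      + (8 - 5 * Real.log (1 + γ) - 126 * r + 39 * Real.log 2 * r) * γ
      + (20 - 162 * r - 16 * Real.log (1 + γ) + 42 * Real.log 2 * r) * γ ^ 2
      + (16 - 90 * r - 18 * Real.log (1 + γ) + 12 * Real.log 2 * r) * γ ^ 3
      + (4 - 8 * Real.log (1 + γ) - 18 * r - 6 * Real.log 2 * r) * γ ^ 4
      + (-Real.log (1 + γ) - 3 * Real.log 2 * r) * γ ^ 5 ≤ 0) := by
  have hγ0 : (0:ℝ) ≤ γ := by linarith
  have hm0 : (0.6931:ℝ) ≤ Real.log 2 := by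
    have := Real.log_two_gt_d9; linarith
  have hm1 : Real.log 2 < 1 := by
    have := Real.log_two_lt_d9; linarith
  have hL : Real.log 2 ≤ Real.log (1 + γ) := by
    apply Real.log_le_log (by norm_num) (by linarith)
  -- key sub-lemma
  have key : 4 * (γ + 1) ≤ Real.log (1 + γ) * (γ ^ 2 + 9 * γ + 9) := by
    nlinarith [sq_nonneg γ, sq_nonneg (γ - 1)]
  have hg2 : (0:ℝ) ≤ γ ^ 2 - 1 := by nlinarith
  have hg3 : (0:ℝ) ≤ γ ^ 3 - 1 := by nlinarith
  have h1 : 0 ≤ 3 * r * (γ * (γ ^ 2 - 1) + 6 * γ ^ 2 * (γ ^ 2 - 1)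
      + Real.log 2 * (2 * γ + γ ^ 2) * (γ ^ 3 - 1)) := by
    apply mul_nonneg (by linarith)
    have ha : 0 ≤ γ * (γ ^ 2 - 1) := mul_nonneg hγ0 hg2
    have hb : 0 ≤ 6 * γ ^ 2 * (γ ^ 2 - 1) := by positivity
    have hc : 0 ≤ Real.log 2 * (2 * γ + γ ^ 2) * (γ ^ 3 - 1) := by
      apply mul_nonneg (mul_nonneg (by linarith) (by positivity)) hg3
    linarith
  have h2 : 0 ≤ (Real.log (1 + γ) * (γ ^ 2 + 9 * γ + 9) - 4 * (γ + 1)) * ((γ - 1) * γ ^ 2) := by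
    apply mul_nonneg (by linarith)
    apply mul_nonneg (by linarith) (by positivity)
  constructor
  · nlinarith [h1, h2]
  · intro h3 h4 h5
    have hcube : (12 * Real.log 2 * r - 36 * r)
      + (8 - 129 * r - 5 * Real.log (1 + γ) + 33 * Real.log 2 * r) * γ
      + (24 - 180 * r - 25 * Real.log (1 + γ) + 39 * Real.log 2 * r) * γ ^ 2
      + (16 - 18 * Real.log (1 + γ) - 87 * r + 12 * Real.log 2 * r) * γ ^ 3 ≤ 0 := by
      have t1 := mul_nonneg (neg_nonneg.2 h3) hγ0
      have t2 := mul_nonneg (neg_nonneg.2 h4) (sq_nonneg γ)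
      have t3 := mul_nonneg (neg_nonneg.2 h5) (by positivity : (0:ℝ) ≤ γ ^ 3)
      nlinarith [mul_nonneg hr (by linarith : (0:ℝ) ≤ 36 - 12 * Real.log 2)]
    nlinarith [h1, h2]
end
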